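/- For every n ∈ ℕ, Π_{k ∈ Reg_n} Γ(k/n) = (2π)^{(ρ(n)−1)/2} / √(κ(n)), where Γ is the Gamma function and κ(n) = Π_{p | n} p is the largest squarefree divisor of n. -/

import Mathlib

open Finset Real
open scoped Classical

/-- `k` is regular (mod `n`): there is an integer `x` with `k² x ≡ k (mod n)`. -/
def IsRegularMod (k n : ℕ) : Prop := ∃ x : ℤ, (n : ℤ) ∣ (k : ℤ) ^ 2 * x - (k : ℤ)

/-- `Reg_n`, the set of `k ∈ {1,…,n}` that are regular (mod `n`). -/
noncomputable def Reg (n : ℕ) : Finset ℕ :=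
  (Finset.Icc 1 n).filter fun k => IsRegularMod k n

/-- `κ(n) = ∏_{p ∣ n} p`, the largest squarefree divisor of `n`. -/
def kappa (n : ℕ) : ℕ := ∏ p ∈ n.primeFactors, p

/-!
`k` is regular (mod `n`) iff `d = gcd(k, n)` is a unitary divisor of `n`, i.e. `gcd(d, n / d) = 1`.
Regularity is preserved by `k ↦ n - k`, so by the reflection formula the square of the product is
`∏ π / sin (π k / n)` over `k ∈ Reg_n \ {n}`. Writing `k / n = j / e` in lowest terms identifies
`Reg_n \ {n}` with the pairs of a unitary divisor `e > 1` of `n` and a residue `j` prime to `e`, and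
`∏_j 2 sin (π j / e) = |∏_j (1 - ζ_e ^ j)| = Φ_e(1)`. This is `p` when `e` is a power of the prime
`p` and `1` otherwise; as the unitary prime-power divisors of `n` are the `p ^ v_p(n)`, the product
of the sines is `κ(n)`.
-/

theorem exists_dvd_mul_sub_iff_gcd_dvd {R : Type*} [CommRing R] [IsDomain R] [IsBezout R]
    [GCDMonoid R] (a b n : R) : (∃ x, n ∣ a * x - b) ↔ gcd a n ∣ b := by
  rw [gcd_dvd_iff_exists]
  constructor
  · rintro ⟨x, c, hc⟩
    exact ⟨x, -c, by rw [mul_neg, ← hc]; ring⟩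
  · rintro ⟨x, y, rfl⟩
    exact ⟨x, -y, by ring⟩

theorem isRegularMod_iff_gcd_dvd (k n : ℕ) : IsRegularMod k n ↔ Nat.gcd (k ^ 2) n ∣ k := by
  rw [IsRegularMod, exists_dvd_mul_sub_iff_gcd_dvd, ← Int.coe_gcd, ← Nat.cast_pow,
    Int.gcd_natCast_natCast, Int.natCast_dvd_natCast]

theorem gcd_sq_eq_gcd_mul_gcd_gcd_div (k n : ℕ) :
    Nat.gcd (k ^ 2) n = Nat.gcd k n * Nat.gcd (Nat.gcd k n) (n / Nat.gcd k n) := by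
  obtain ⟨k', m, hkm, hk, hn⟩ := Nat.exists_coprime k n
  set d := Nat.gcd k n
  rcases Nat.eq_zero_or_pos d with hd | hd
  · simp_all
  calc Nat.gcd (k ^ 2) n = Nat.gcd (d * (k' ^ 2 * d)) (d * m) := by rw [hk, hn]; ring_nf
    _ = d * Nat.gcd d m := by
      rw [Nat.gcd_mul_left, Nat.Coprime.gcd_mul_left_cancel d (hkm.pow_left 2)]
    _ = d * Nat.gcd d (n / d) := by rw [hn, Nat.mul_div_cancel m hd]

theorem isRegularMod_iff_coprime {k n : ℕ} (hn : 0 < n) :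
    IsRegularMod k n ↔ Nat.Coprime (Nat.gcd k n) (n / Nat.gcd k n) := by
  set d := Nat.gcd k n with hd
  have hd0 : 0 < d := Nat.gcd_pos_of_pos_right k hn
  rw [isRegularMod_iff_gcd_dvd, gcd_sq_eq_gcd_mul_gcd_gcd_div, ← hd,
    ← Nat.mul_div_cancel' (Nat.gcd_dvd_left k n), ← hd, Nat.mul_dvd_mul_iff_left hd0]
  constructor
  · intro h
    -- `k / d` is coprime to `n / d`, hence so is every divisor of `k / d`
    exact Nat.eq_one_of_dvd_one <| (Nat.coprime_div_gcd_div_gcd hd0) ▸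
      Nat.dvd_gcd h (Nat.gcd_dvd_right _ _)
  · intro h
    rw [h]
    exact one_dvd _

theorem isRegularMod_self (n : ℕ) : IsRegularMod n n :=
  ⟨0, by simp⟩

theorem IsRegularMod.sub_left {k n : ℕ} (hk : k ≤ n) (h : IsRegularMod k n) :
    IsRegularMod (n - k) n := by
  obtain ⟨x, hx⟩ := h
  refine ⟨-x, ?_⟩
  have : ((n - k : ℕ) : ℤ) ^ 2 * -x - (n - k : ℕ) =
      n * (2 * k * x - n * x - 1) - (k ^ 2 * x - k) := by
    push_cast [hk]; ring
  rw [this]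
  exact dvd_sub (dvd_mul_right _ _) hx

noncomputable def regularBelow (n : ℕ) : Finset ℕ :=
  (Finset.Ico 1 n).filter fun k => IsRegularMod k n

theorem Reg_eq_insert_regularBelow {n : ℕ} (hn : 1 ≤ n) : Reg n = insert n (regularBelow n) := by
  rw [Reg, regularBelow, ← Finset.Ico_insert_right hn, Finset.filter_insert,
    if_pos (isRegularMod_self n)]

theorem self_notMem_regularBelow (n : ℕ) : n ∉ regularBelow n := fun h =>
  Finset.right_notMem_Ico (Finset.mem_filter.mp h).1

theorem prod_regularBelow_comp_sub {M : Type*} [CommMonoid M] (n : ℕ) (f : ℕ → M) :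
    ∏ k ∈ regularBelow n, f (n - k) = ∏ k ∈ regularBelow n, f k := by
  have hmaps : ∀ k ∈ regularBelow n, n - k ∈ regularBelow n := by
    intro k hk
    simp only [regularBelow, Finset.mem_filter, Finset.mem_Ico] at hk ⊢
    exact ⟨by omega, hk.2.sub_left (by omega)⟩
  have hinv : ∀ k ∈ regularBelow n, n - (n - k) = k := by
    intro k hk
    simp only [regularBelow, Finset.mem_filter, Finset.mem_Ico] at hk
    omega
  exact Finset.prod_nbij' (n - ·) (n - ·) hmaps hmaps hinv hinv (fun _ _ => rfl)

def unitaryDivisors (n : ℕ) : Finset ℕ :=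
  n.divisors.filter fun e => Nat.Coprime e (n / e)

theorem gcd_div_mul_eq_div {e j n : ℕ} (he : e ∣ n) (hj : Nat.Coprime j e) :
    Nat.gcd (n / e * j) n = n / e := by
  nth_rw 2 [← Nat.div_mul_cancel he]
  rw [Nat.gcd_mul_left, hj, mul_one]

theorem prod_regularBelow_eq_prod_unitaryDivisors {M : Type*} [CommMonoid M] {n : ℕ} (hn : 0 < n)
    (f : ℝ → M) :
    ∏ k ∈ regularBelow n, f (k / n) =
      ∏ e ∈ (unitaryDivisors n).filter (1 < ·), ∏ j ∈ (range e).filter (Nat.Coprime · e),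
        f (j / e) := by
  rw [Finset.prod_sigma']
  -- `k ↦ (n / gcd(k, n), k / gcd(k, n))` writes `k / n` in lowest terms
  refine Finset.prod_bij' (fun k _ => ⟨n / Nat.gcd k n, k / Nat.gcd k n⟩)
    (fun x _ => n / x.1 * x.2) ?_ ?_ ?_ ?_ ?_
  · intro k hk
    simp only [regularBelow, Finset.mem_filter, Finset.mem_Ico, isRegularMod_iff_coprime hn] at hk
    have hd := Nat.gcd_dvd_right k n
    have hd0 : 0 < Nat.gcd k n := Nat.gcd_pos_of_pos_right k hn
    have hdk : Nat.gcd k n ≤ k := Nat.le_of_dvd (by omega) (Nat.gcd_dvd_left k n)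
    simp only [unitaryDivisors, Finset.mem_sigma, Finset.mem_filter, Nat.mem_divisors,
      Finset.mem_range, Nat.div_div_self hd hn.ne']
    refine ⟨⟨⟨⟨Nat.div_dvd_of_dvd hd, hn.ne'⟩, hk.2.symm⟩, ?_⟩,
      Nat.div_lt_div_of_lt_of_dvd hd hk.1.2, Nat.coprime_div_gcd_div_gcd hd0⟩
    rw [Nat.lt_div_iff_mul_lt' hd]
    omega
  · rintro ⟨e, j⟩ hx
    simp only [unitaryDivisors, Finset.mem_sigma, Finset.mem_filter, Nat.mem_divisors,
      Finset.mem_range] at hx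
    obtain ⟨⟨⟨⟨he, -⟩, hcop⟩, he1⟩, hj, hje⟩ := hx
    have hj0 : 0 < j := Nat.pos_of_ne_zero fun h => by simp [h] at hje; omega
    have hne : n / e * e = n := Nat.div_mul_cancel he
    have hne0 : 0 < n / e := Nat.div_pos (Nat.le_of_dvd hn he) (by omega)
    simp only [regularBelow, Finset.mem_filter, Finset.mem_Ico, isRegularMod_iff_coprime hn,
      gcd_div_mul_eq_div he hje, Nat.div_div_self he hn.ne']
    refine ⟨⟨Nat.mul_pos hne0 hj0, (Nat.mul_lt_mul_of_pos_left hj hne0).trans_eq hne⟩, hcop.symm⟩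
  · intro k _
    simp only [Nat.div_div_self (Nat.gcd_dvd_right k n) hn.ne',
      Nat.mul_div_cancel' (Nat.gcd_dvd_left k n)]
  · rintro ⟨e, j⟩ hx
    simp only [unitaryDivisors, Finset.mem_sigma, Finset.mem_filter, Nat.mem_divisors,
      Finset.mem_range] at hx
    obtain ⟨⟨⟨⟨he, -⟩, -⟩, he1⟩, -, hje⟩ := hx
    have hne0 : 0 < n / e := Nat.div_pos (Nat.le_of_dvd hn he) (by omega)
    simp only [gcd_div_mul_eq_div he hje, Nat.div_div_self he hn.ne',
      Nat.mul_div_cancel_left j hne0]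
  · intro k _
    have hd0 : (Nat.gcd k n : ℝ) ≠ 0 := by exact_mod_cast (Nat.gcd_pos_of_pos_right k hn).ne'
    rw [Nat.cast_div (Nat.gcd_dvd_left k n) hd0, Nat.cast_div (Nat.gcd_dvd_right k n) hd0,
      div_div_div_cancel_right₀ hd0]

theorem norm_one_sub_exp_two_pi_I_mul {x : ℝ} (h0 : 0 ≤ x) (h1 : x ≤ 1) :
    ‖1 - Complex.exp (2 * π * Complex.I * x)‖ = 2 * sin (π * x) := by
  rw [norm_sub_rev,
    show 2 * π * Complex.I * x = Complex.I * ((2 * π * x : ℝ) : ℂ) by push_cast; ring,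
    Complex.norm_exp_I_mul_ofReal_sub_one, show 2 * π * x / 2 = π * x by ring, Real.norm_of_nonneg]
  exact mul_nonneg zero_le_two <| sin_nonneg_of_nonneg_of_le_pi (by positivity) <|
    mul_le_of_le_one_right pi_pos.le h1

theorem prod_one_sub_exp_coprime_eq_eval_one_cyclotomic {e : ℕ} (he : 0 < e) :
    ∏ j ∈ (range e).filter (Nat.Coprime · e), (1 - Complex.exp (2 * π * Complex.I * (j / e))) =
      (((Polynomial.cyclotomic e ℝ).eval 1 : ℝ) : ℂ) := by
  have hζ := Complex.isPrimitiveRoot_exp e he.ne'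
  have hpow (j : ℕ) :
      Complex.exp (2 * π * Complex.I * (j / e)) = Complex.exp (2 * π * Complex.I / e) ^ j := by
    rw [← Complex.exp_nat_mul]; ring_nf
  rw [← Complex.ofReal_one, ← Polynomial.cyclotomic.eval_apply_ofReal, Complex.ofReal_one,
    Polynomial.cyclotomic_eq_prod_X_sub_primitiveRoots hζ, Polynomial.eval_prod]
  simp only [Polynomial.eval_sub, Polynomial.eval_X, Polynomial.eval_C]
  refine Finset.prod_nbij (fun j => Complex.exp (2 * π * Complex.I * (j / e))) ?_ ?_ ?_
    (fun _ _ => rfl)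
  · intro j hj
    rw [mem_primitiveRoots he]
    exact Complex.isPrimitiveRoot_exp_of_coprime j e he.ne' (Finset.mem_filter.mp hj).2
  · intro i hi j hj hij
    simp only [Finset.coe_filter, Finset.mem_range, Set.mem_ofPred_eq, hpow] at hi hj hij
    exact hζ.pow_inj hi.1 hj.1 hij
  · intro μ hμ
    obtain ⟨j, hj, hje, rfl⟩ := (Complex.isPrimitiveRoot_iff μ e he.ne').mp
      ((mem_primitiveRoots he).mp hμ)
    exact ⟨j, Finset.mem_filter.mpr ⟨Finset.mem_range.mpr hj, hje⟩, rfl⟩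

theorem prod_two_sin_coprime_eq_eval_one_cyclotomic {e : ℕ} (he : 0 < e) :
    ∏ j ∈ (range e).filter (Nat.Coprime · e), 2 * sin (π * (j / e)) =
      (Polynomial.cyclotomic e ℝ).eval 1 := by
  have hnorm : ∀ j ∈ (range e).filter (Nat.Coprime · e),
      2 * sin (π * (j / e)) = ‖1 - Complex.exp (2 * π * Complex.I * (j / e))‖ := by
    intro j hj
    have hje : (j : ℝ) ≤ e := by exact_mod_cast (Finset.mem_range.mp (Finset.mem_filter.mp hj).1).le
    rw [← norm_one_sub_exp_two_pi_I_mul (by positivity) (div_le_one_of_le₀ hje (Nat.cast_nonneg e))]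
    push_cast; rfl
  rw [Finset.prod_congr rfl hnorm, ← norm_prod, prod_one_sub_exp_coprime_eq_eval_one_cyclotomic he,
    Complex.norm_real, Real.norm_of_nonneg (Polynomial.cyclotomic_nonneg e le_rfl)]

theorem pow_mem_unitaryDivisors_iff {n p k : ℕ} (hn : n ≠ 0) (hp : p.Prime) (hk : k ≠ 0) :
    p ^ k ∈ unitaryDivisors n ↔ n.factorization p = k := by
  rw [unitaryDivisors, Finset.mem_filter, Nat.mem_divisors]
  constructor
  · rintro ⟨⟨hdvd, -⟩, hcop⟩
    have hndvd : ¬p ∣ n / p ^ k := fun h =>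
      hp.one_lt.ne' (Nat.eq_one_of_dvd_coprimes hcop (dvd_pow_self p hk) h)
    conv_lhs => rw [← Nat.mul_div_cancel' hdvd]
    rw [Nat.factorization_mul_of_coprime hcop, Finsupp.add_apply, hp.factorization_pow,
      Finsupp.single_eq_same, Nat.factorization_eq_zero_of_not_dvd hndvd, add_zero]
  · rintro rfl
    exact ⟨⟨Nat.ordProj_dvd n p, hn⟩, (Nat.coprime_ordCompl hp hn).pow_left _⟩

theorem filter_isPrimePow_unitaryDivisors {n : ℕ} (hn : n ≠ 0) :
    (unitaryDivisors n).filter IsPrimePow =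
      n.primeFactors.image fun p => p ^ n.factorization p := by
  ext e
  rw [Finset.mem_filter, Finset.mem_image, isPrimePow_nat_iff]
  constructor
  · rintro ⟨he, p, k, hp, hk, rfl⟩
    have hfac := (pow_mem_unitaryDivisors_iff hn hp hk.ne').mp he
    exact ⟨p, Finsupp.mem_support_iff.mpr (hfac ▸ hk.ne'), by rw [hfac]⟩
  · rintro ⟨p, hp, rfl⟩
    have hk : n.factorization p ≠ 0 := Finsupp.mem_support_iff.mp hp
    have hp' := Nat.prime_of_mem_primeFactors hp
    exact ⟨(pow_mem_unitaryDivisors_iff hn hp' hk).mpr rfl, p, _, hp', Nat.pos_of_ne_zero hk, rfl⟩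

theorem prod_eval_one_cyclotomic_unitaryDivisors {n : ℕ} (hn : n ≠ 0) :
    ∏ e ∈ (unitaryDivisors n).filter (1 < ·), (Polynomial.cyclotomic e ℝ).eval 1 = kappa n := by
  rw [← Finset.prod_subset (Finset.monotone_filter_right _ fun _ _ he => IsPrimePow.one_lt he)]
  · rw [filter_isPrimePow_unitaryDivisors hn, Finset.prod_image, kappa, Nat.cast_prod]
    · refine Finset.prod_congr rfl fun p hp => ?_
      have hk : n.factorization p ≠ 0 := Finsupp.mem_support_iff.mp hp
      have := Fact.mk (Nat.prime_of_mem_primeFactors hp)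
      rw [← Nat.succ_pred hk, Polynomial.eval_one_cyclotomic_prime_pow]
    · intro p hp q hq hpq
      have hkp : n.factorization p ≠ 0 := Finsupp.mem_support_iff.mp hp
      have hkq : n.factorization q ≠ 0 := Finsupp.mem_support_iff.mp hq
      simp only at hpq
      rw [← Nat.succ_pred hkp, ← Nat.succ_pred hkq] at hpq
      exact (Nat.prime_of_mem_primeFactors hp).pow_inj (Nat.prime_of_mem_primeFactors hq) hpq |>.1
  · intro e he hnot
    rw [Finset.mem_filter] at he hnot
    refine Polynomial.eval_one_cyclotomic_not_prime_pow fun {p} hp k hpk => hnot ⟨he.1, ?_⟩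
    rw [isPrimePow_nat_iff]
    exact ⟨p, k, hp, Nat.pos_of_ne_zero fun hk => by simp [hk] at hpk; omega, hpk⟩

theorem prod_two_sin_regularBelow {n : ℕ} (hn : 0 < n) :
    ∏ k ∈ regularBelow n, 2 * sin (π * (k / n)) = kappa n := by
  rw [prod_regularBelow_eq_prod_unitaryDivisors hn (fun x => 2 * sin (π * x)),
    ← prod_eval_one_cyclotomic_unitaryDivisors hn.ne']
  exact Finset.prod_congr rfl fun e he =>
    prod_two_sin_coprime_eq_eval_one_cyclotomic (zero_lt_one.trans (Finset.mem_filter.mp he).2)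

theorem prod_Gamma_regularBelow_sq {n : ℕ} (hn : 0 < n) :
    (∏ k ∈ regularBelow n, Gamma (k / n)) ^ 2 = (2 * π) ^ #(regularBelow n) / kappa n := by
  have hreflect : ∏ k ∈ regularBelow n, Gamma (k / n) =
      ∏ k ∈ regularBelow n, Gamma (1 - k / n) := by
    rw [← prod_regularBelow_comp_sub n fun k => Gamma ((k : ℝ) / n)]
    refine Finset.prod_congr rfl fun k hk => ?_
    have hkn : k ≤ n := (Finset.mem_Ico.mp (Finset.mem_filter.mp hk).1).2.le
    rw [Nat.cast_sub hkn, sub_div, div_self (by positivity)]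
  calc (∏ k ∈ regularBelow n, Gamma (k / n)) ^ 2
      = ∏ k ∈ regularBelow n, Gamma (k / n) * Gamma (1 - k / n) := by
        rw [sq, Finset.prod_mul_distrib]
        nth_rw 2 [hreflect]
    _ = ∏ k ∈ regularBelow n, 2 * π / (2 * sin (π * (k / n))) :=
        Finset.prod_congr rfl fun k _ => by
          rw [Gamma_mul_Gamma_one_sub, mul_div_mul_left _ _ two_ne_zero]
    _ = (2 * π) ^ #(regularBelow n) / kappa n := by
        rw [Finset.prod_div_distrib, Finset.prod_const, prod_two_sin_regularBelow hn]

theorem prod_Gamma_reg (n : ℕ) (hn : 1 ≤ n) :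
    ∏ k ∈ Reg n, Real.Gamma ((k : ℝ) / n) =
      (2 * Real.pi) ^ ((((Reg n).card : ℝ) - 1) / 2) / Real.sqrt (kappa n) := by
  have hnonneg : 0 ≤ ∏ k ∈ regularBelow n, Gamma ((k : ℝ) / n) :=
    Finset.prod_nonneg fun k _ => Gamma_nonneg_of_nonneg (by positivity)
  rw [Reg_eq_insert_regularBelow hn, Finset.prod_insert (self_notMem_regularBelow n),
    Finset.card_insert_of_notMem (self_notMem_regularBelow n), div_self (by positivity),
    Gamma_one, one_mul, ← Real.sqrt_sq hnonneg, prod_Gamma_regularBelow_sq hn,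
    Real.sqrt_div' _ (Nat.cast_nonneg _), Real.sqrt_eq_rpow, ← Real.rpow_natCast,
    ← Real.rpow_mul (by positivity)]
  push_cast
  ring_nf
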